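/- arXiv:1210.2881 — 4 statements merged into one kernel-verified Lean document; each statement's English description precedes it below -/
import Mathlib

section
/- The Lebesgue measure of the gauge ball of radius ε in ℝ^{2n+1} equals |B(0,ε)| = ε^{2n+2} · (ω(2n)/n) · ∫₀¹ (1−s²)^{n/2} ds, where ω(2n) is the surface area of the unit sphere in ℝ^{2n}. -/
open MeasureTheory Filter Topology

noncomputable section

/-- Points of the Heisenberg group `ℍⁿ = ℝⁿ × ℝⁿ × ℝ`. -/
abbrev Heis (n : ℕ) := (Fin n → ℝ) × (Fin n → ℝ) × ℝ

/-- Heisenberg group product. -/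
def hMul {n : ℕ} (P Q : Heis n) : Heis n :=
  (P.1 + Q.1, P.2.1 + Q.2.1,
    P.2.2 + Q.2.2 + 2 * ((∑ i, Q.1 i * P.2.1 i) - ∑ i, P.1 i * Q.2.1 i))

/-- Group inverse. -/
def hInv {n : ℕ} (P : Heis n) : Heis n := (-P.1, -P.2.1, -P.2.2)

/-- Group identity. -/
def hOne {n : ℕ} : Heis n := (0, 0, 0)

/-- Anisotropic dilation `δ_r(x,y,t) = (rx, ry, r²t)`. -/
def hDil {n : ℕ} (r : ℝ) (P : Heis n) : Heis n := (r • P.1, r • P.2.1, r ^ 2 * P.2.2)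

/-- Homogeneous gauge `‖(x,y,t)‖ = ((|x|²+|y|²)² + t²)^{1/4}`. -/
def hGauge {n : ℕ} (P : Heis n) : ℝ :=
  (((∑ i, (P.1 i) ^ 2) + ∑ i, (P.2.1 i) ^ 2) ^ 2 + (P.2.2) ^ 2) ^ ((1 : ℝ) / 4)

/-- Gauge ball of radius `ε` centred at `P`. -/
def hBall {n : ℕ} (P : Heis n) (ε : ℝ) : Set (Heis n) :=
  {Q | hGauge (hMul (hInv P) Q) < ε}

/-- Closed gauge ball of radius `ε` centred at `P`. -/
def hClosedBall {n : ℕ} (P : Heis n) (ε : ℝ) : Set (Heis n) :=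
  {Q | hGauge (hMul (hInv P) Q) ≤ ε}

/-- Horizontal derivative `X_i u = ∂_{x_i} u + 2 y_i ∂_t u`. -/
def Xd {n : ℕ} (i : Fin n) (u : Heis n → ℝ) (P : Heis n) : ℝ :=
  fderiv ℝ u P ((Pi.single i 1 : Fin n → ℝ), (0 : Fin n → ℝ), 2 * P.2.1 i)

/-- Horizontal derivative `Y_i u = ∂_{y_i} u − 2 x_i ∂_t u`. -/
def Yd {n : ℕ} (i : Fin n) (u : Heis n → ℝ) (P : Heis n) : ℝ :=
  fderiv ℝ u P ((0 : Fin n → ℝ), (Pi.single i 1 : Fin n → ℝ), -(2 * P.1 i))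

/-- Vertical derivative `∂_t u`. -/
def Td {n : ℕ} (u : Heis n → ℝ) (P : Heis n) : ℝ :=
  fderiv ℝ u P ((0 : Fin n → ℝ), (0 : Fin n → ℝ), (1 : ℝ))

/-- Norm of the horizontal gradient. -/
def hGradNorm {n : ℕ} (u : Heis n → ℝ) (P : Heis n) : ℝ :=
  Real.sqrt ((∑ i, (Xd i u P) ^ 2) + ∑ i, (Yd i u P) ^ 2)

/-- Horizontal (Kohn) Laplacian `Δ_ℍ u = Σᵢ (X_i² u + Y_i² u)`. -/
def hLap {n : ℕ} (u : Heis n → ℝ) (P : Heis n) : ℝ :=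
  (∑ i, Xd i (Xd i u) P) + ∑ i, Yd i (Yd i u) P

/-- Quadratic form of the (symmetrized) horizontal Hessian evaluated at a horizontal
vector `(v, w)` — the quadratic form of the symmetrized matrix agrees with that of the
raw second-derivative matrix. -/
def hQuad {n : ℕ} (u : Heis n → ℝ) (P : Heis n) (v w : Fin n → ℝ) : ℝ :=
  ∑ i, ∑ j,
    (v i * v j * Xd i (Xd j u) P + v i * w j * Xd i (Yd j u) P +
      w i * v j * Yd i (Xd j u) P + w i * w j * Yd i (Yd j u) P)

/-!
Slice the ball along the centre: in coordinates `(z, t) ∈ ℝ²ⁿ × ℝ` it is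
`{‖z‖⁴ + t² < ε⁴}`, whose slice at height `|t| < ε²` is the Euclidean ball of radius
`(ε⁴ - t²)^{1/4}`, of volume `|B₁| (ε⁴ - t²)^{n/2}`. Integrating in `t` and substituting
`t = ε² s` gives `2 |B₁| ε^{2n+2} ∫₀¹ (1 - s²)^{n/2} ds`, and `ω(2n) / n = 2 |B₁|`.
-/

open Real Set Module intervalIntegral

lemma norm_pow_four_lt_iff_mem_ball {E : Type*} [SeminormedAddCommGroup E] {a : ℝ} (ha : 0 ≤ a)
    (z : E) : ‖z‖ ^ 4 < a ↔ z ∈ Metric.ball (0 : E) (a ^ (4 : ℝ)⁻¹) := by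
  rw [mem_ball_zero_iff, lt_rpow_inv_iff_of_pos (norm_nonneg z) ha (by norm_num)]
  norm_cast

section KoranyiSlices

variable {E : Type*} [NormedAddCommGroup E] [NormedSpace ℝ E] [FiniteDimensional ℝ E]
  [MeasurableSpace E] [BorelSpace E] (μ : Measure E) [μ.IsAddHaarMeasure]

lemma measure_slice_norm_pow_four_add_sq_lt {c : ℝ} (hc : 0 ≤ c) (t : ℝ) :
    μ {z : E | ‖z‖ ^ 4 + t ^ 2 < c ^ 2} =
      (Ioo (-c) c).indicator
        (fun t ↦ ENNReal.ofReal ((c ^ 2 - t ^ 2) ^ ((finrank ℝ E : ℝ) / 4)) * μ (Metric.ball 0 1))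
        t := by
  by_cases ht : t ∈ Ioo (-c) c
  · have hpos : 0 < c ^ 2 - t ^ 2 := sub_pos.2 (sq_lt_sq' ht.1 ht.2)
    have hslice : {z : E | ‖z‖ ^ 4 + t ^ 2 < c ^ 2} =
        Metric.ball 0 ((c ^ 2 - t ^ 2) ^ (4 : ℝ)⁻¹) := by
      ext z
      rw [← norm_pow_four_lt_iff_mem_ball hpos.le, lt_sub_iff_add_lt]
      rfl
    rw [indicator_of_mem ht, hslice, Measure.addHaar_ball_of_pos μ _ (by positivity),
      ← rpow_natCast, ← rpow_mul hpos.le, inv_mul_eq_div]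
  · have hslice : {z : E | ‖z‖ ^ 4 + t ^ 2 < c ^ 2} = ∅ := by
      refine eq_empty_of_forall_notMem fun z hz ↦ ht ?_
      have hlt : t ^ 2 < c ^ 2 := (le_add_of_nonneg_left (by positivity)).trans_lt hz
      exact abs_lt.1 (abs_lt_of_sq_lt_sq hlt hc)
    rw [indicator_of_notMem ht, hslice, measure_empty]

lemma prod_measure_norm_pow_four_add_sq_lt {c : ℝ} (hc : 0 ≤ c) :
    (μ.prod volume) {p : E × ℝ | ‖p.1‖ ^ 4 + p.2 ^ 2 < c ^ 2} =
      ENNReal.ofReal (∫ t in -c..c, (c ^ 2 - t ^ 2) ^ ((finrank ℝ E : ℝ) / 4)) *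
        μ (Metric.ball 0 1) := by
  have hopen : IsOpen {p : E × ℝ | ‖p.1‖ ^ 4 + p.2 ^ 2 < c ^ 2} :=
    isOpen_lt (by fun_prop) continuous_const
  have hcont : Continuous fun t : ℝ ↦ (c ^ 2 - t ^ 2) ^ ((finrank ℝ E : ℝ) / 4) :=
    (by fun_prop : Continuous fun t : ℝ ↦ c ^ 2 - t ^ 2).rpow_const fun _ ↦ Or.inr (by positivity)
  rw [Measure.prod_apply_symm hopen.measurableSet]
  change ∫⁻ t, μ {z : E | ‖z‖ ^ 4 + t ^ 2 < c ^ 2} = _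
  rw [lintegral_congr (measure_slice_norm_pow_four_add_sq_lt μ hc),
    lintegral_indicator measurableSet_Ioo, lintegral_mul_const' _ _ measure_ball_lt_top.ne,
    integral_of_le (by linarith), integral_Ioc_eq_integral_Ioo, ofReal_integral_eq_lintegral_ofReal]
  · exact (hcont.integrableOn_Icc).mono_set Ioo_subset_Icc_self
  · filter_upwards [ae_restrict_mem measurableSet_Ioo] with t ht
    exact rpow_nonneg (sub_nonneg.2 (sq_le_sq' ht.1.le ht.2.le)) _

end KoranyiSlices

lemma integral_neg_self_eq_two_mul_of_even {f : ℝ → ℝ} (hf : Continuous f)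
    (heven : ∀ t, f (-t) = f t) (c : ℝ) : ∫ t in -c..c, f t = 2 * ∫ t in 0..c, f t := by
  have hleft : ∫ t in -c..0, f t = ∫ t in 0..c, f t := by
    simpa only [heven, neg_zero, neg_neg] using integral_comp_neg (a := -c) (b := 0) f
  rw [← integral_add_adjacent_intervals (b := 0) (hf.intervalIntegrable _ _)
    (hf.intervalIntegrable _ _), hleft, two_mul]

lemma integral_sq_sub_sq_rpow {c p : ℝ} (hp : 0 ≤ p) :
    ∫ t in -c..c, (c ^ 2 - t ^ 2) ^ p = 2 * c * (c ^ 2) ^ p * ∫ s in 0..1, (1 - s ^ 2) ^ p := by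
  have hcont : Continuous fun t : ℝ ↦ (c ^ 2 - t ^ 2) ^ p :=
    (by fun_prop : Continuous fun t : ℝ ↦ c ^ 2 - t ^ 2).rpow_const fun _ ↦ Or.inr hp
  have hscale : ∫ t in 0..c, (c ^ 2 - t ^ 2) ^ p = c * ∫ s in 0..1, (c ^ 2 - (c * s) ^ 2) ^ p := by
    simpa only [mul_zero, mul_one, smul_eq_mul] using
      (smul_integral_comp_mul_left (fun t ↦ (c ^ 2 - t ^ 2) ^ p) c (a := 0) (b := 1)).symm
  have hfactor : ∫ s in 0..1, (c ^ 2 - (c * s) ^ 2) ^ p =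
      (c ^ 2) ^ p * ∫ s in 0..1, (1 - s ^ 2) ^ p := by
    rw [← intervalIntegral.integral_const_mul]
    refine integral_congr fun s hs ↦ ?_
    rw [uIcc_of_le zero_le_one] at hs
    rw [← mul_rpow (sq_nonneg c) (sub_nonneg.2 (pow_le_one₀ hs.1 hs.2))]
    ring_nf
  rw [integral_neg_self_eq_two_mul_of_even hcont (fun t ↦ by rw [neg_sq]), hscale, hfactor]
  ring

section HeisenbergCoordinates

variable (n : ℕ)

def euclideanProdEquivHeis : EuclideanSpace ℝ (Fin (2 * n)) × ℝ ≃ᵐ Heis n :=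
  (((MeasurableEquiv.toLp 2 (Fin (2 * n) → ℝ)).symm.trans <|
      (MeasurableEquiv.piCongrLeft (fun _ ↦ ℝ)
          (finSumFinEquiv.trans (finCongr (two_mul n).symm))).symm.trans
        (MeasurableEquiv.sumPiEquivProdPi fun _ ↦ ℝ)).prodCongr
    (MeasurableEquiv.refl ℝ)).trans MeasurableEquiv.prodAssoc

lemma measurePreserving_euclideanProdEquivHeis :
    MeasurePreserving (euclideanProdEquivHeis n) volume volume :=
  volume_preserving_prodAssoc.comp <|
    (((volume_measurePreserving_sumPiEquivProdPi _).comp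
      ((volume_measurePreserving_piCongrLeft _ _).symm _)).comp
        (EuclideanSpace.volume_preserving_symm_measurableEquiv_toLp _)).prod
      (MeasurePreserving.id volume)

lemma euclideanProdEquivHeis_sq_norm (p : EuclideanSpace ℝ (Fin (2 * n)) × ℝ) :
    (∑ i, (euclideanProdEquivHeis n p).1 i ^ 2) + ∑ i, (euclideanProdEquivHeis n p).2.1 i ^ 2 =
      ‖p.1‖ ^ 2 := by
  rw [EuclideanSpace.norm_sq_eq, ← (finSumFinEquiv.trans (finCongr (two_mul n).symm)).sum_comp,
    Fintype.sum_sum_type]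
  simp only [Real.norm_eq_abs, sq_abs]
  rfl

lemma euclideanProdEquivHeis_snd_snd (p : EuclideanSpace ℝ (Fin (2 * n)) × ℝ) :
    (euclideanProdEquivHeis n p).2.2 = p.2 := rfl

end HeisenbergCoordinates

lemma hMul_hInv_hOne {n : ℕ} (P : Heis n) : hMul (hInv hOne) P = P := by
  simp [hMul, hInv, hOne]

lemma hGauge_lt_iff {n : ℕ} {ε : ℝ} (hε : 0 < ε) (P : Heis n) :
    hGauge P < ε ↔ ((∑ i, P.1 i ^ 2) + ∑ i, P.2.1 i ^ 2) ^ 2 + P.2.2 ^ 2 < ε ^ 4 := by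
  rw [hGauge, one_div, rpow_inv_lt_iff_of_pos (by positivity) hε.le (by norm_num)]
  norm_cast

lemma volume_hBall_hOne (n : ℕ) {ε : ℝ} (hε : 0 < ε) :
    volume (hBall (hOne : Heis n) ε) =
      volume {p : EuclideanSpace ℝ (Fin (2 * n)) × ℝ | ‖p.1‖ ^ 4 + p.2 ^ 2 < (ε ^ 2) ^ 2} := by
  rw [← (measurePreserving_euclideanProdEquivHeis n).measure_preimage_equiv]
  congr 1
  ext p
  simp only [hBall, mem_preimage, mem_ofPred_eq, hMul_hInv_hOne, hGauge_lt_iff hε,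
    euclideanProdEquivHeis_sq_norm, euclideanProdEquivHeis_snd_snd]
  ring_nf

/-- Lebesgue measure of the gauge ball of radius `ε`:
`|B(0,ε)| = ε^{2n+2} (ω(2n)/n) ∫₀¹ (1−s²)^{n/2} ds`, where `ω(2n)` is the surface
area of the unit sphere in `ℝ^{2n}` (equal to `2n` times the volume of the unit ball). -/
theorem volume_gauge_ball (n : ℕ) (hn : 1 ≤ n) (ε : ℝ) (hε : 0 < ε) :
    (volume (hBall (hOne : Heis n) ε)).toReal =
      ε ^ (2 * n + 2) *
        ((2 * n * (volume (Metric.ball (0 : EuclideanSpace ℝ (Fin (2 * n))) 1)).toReal) / n) *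
        ∫ s in (0:ℝ)..1, (1 - s ^ 2) ^ ((n : ℝ) / 2) := by
  have hexponent : (finrank ℝ (EuclideanSpace ℝ (Fin (2 * n))) : ℝ) / 4 = (n : ℝ) / 2 := by
    rw [finrank_euclideanSpace_fin]; push_cast; ring
  have hscale : ((ε ^ 2) ^ 2) ^ ((n : ℝ) / 2) = ε ^ (2 * n) := by
    rw [← rpow_natCast_mul (sq_nonneg _), Nat.cast_ofNat, mul_div_cancel₀ _ two_ne_zero,
      rpow_natCast, ← pow_mul]
  have hprofile : 0 ≤ ∫ s in (0:ℝ)..1, (1 - s ^ 2) ^ ((n : ℝ) / 2) :=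
    integral_nonneg zero_le_one fun s hs ↦ rpow_nonneg (sub_nonneg.2 (pow_le_one₀ hs.1 hs.2)) _
  rw [volume_hBall_hOne n hε, Measure.volume_eq_prod,
    prod_measure_norm_pow_four_add_sq_lt _ (sq_nonneg ε), hexponent,
    integral_sq_sub_sq_rpow (by positivity), hscale, ENNReal.toReal_mul,
    ENNReal.toReal_ofReal (mul_nonneg (by positivity) hprofile)]
  have hn0 : (n : ℝ) ≠ 0 := Nat.cast_ne_zero.2 (Nat.one_le_iff_ne_zero.1 hn)
  field_simp
  ring
end
end

section
/- For each coordinate index i, the integral over the gauge ball satisfies ∫_{B(0,ε)} (x_i² + y_i²) dx dy dt = (1/(n+1)) · (∫₀¹(1−s²)^{(n+1)/2}ds / ∫₀¹(1−s²)^{n/2}ds) · |B(0,ε)| · ε². -/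
open MeasureTheory Filter Topology

noncomputable section

/-!
Write `z = (x, y) ∈ ℝ²ⁿ`. The gauge ball is `{‖z‖⁴ + t² < ε⁴}`, so integrating out `t` turns
the integral over the ball of a function of `z` into an integral over `ℝ²ⁿ` against the radial
weight `2√(ε⁴ - ‖z‖⁴)`. Permuting coordinates shows that `∫ (x_i² + y_i²)` is `1/n` of `∫ ‖z‖²`,
and polar coordinates reduce this integral and the volume to `∫₀^ε r^(2k+1) · 2√(ε⁴ - r⁴) dr`.
The substitutions `r = ε s`, `s² = cos θ` turn the latter into `ε^(2k+4) ∫₀^{π/2} cosᵏ θ sin² θ`,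
while `s = sin θ` gives `∫₀¹ (1 - s²)^(m/2) ds = ∫₀^{π/2} cos^(m+1) θ`; the Wallis recursion
`W (k + 2) = (k + 1) / (k + 2) · W k` for `W k = ∫₀^{π/2} cosᵏ θ` then identifies the constants.
-/

open Real Set

section

open intervalIntegral

def cosPowIntegral (k : ℕ) : ℝ := ∫ x in (0 : ℝ)..π / 2, cos x ^ k

lemma cosPowIntegral_pos (k : ℕ) : 0 < cosPowIntegral k := EulerSine.integral_cos_pow_pos k

lemma cosPowIntegral_add_two (k : ℕ) :
    cosPowIntegral (k + 2) = (k + 1) / (k + 2) * cosPowIntegral k := by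
  simp [cosPowIntegral, integral_cos_pow]

lemma cos_nonneg_of_mem_uIcc_zero_pi_div_two {x : ℝ} (hx : x ∈ uIcc 0 (π / 2)) : 0 ≤ cos x := by
  rw [uIcc_of_le (by positivity)] at hx
  exact cos_nonneg_of_mem_Icc ⟨by linarith [hx.1, pi_pos], hx.2⟩

lemma sin_nonneg_of_mem_uIcc_zero_pi_div_two {x : ℝ} (hx : x ∈ uIcc 0 (π / 2)) : 0 ≤ sin x := by
  rw [uIcc_of_le (by positivity)] at hx
  exact sin_nonneg_of_nonneg_of_le_pi hx.1 (by linarith [hx.2, pi_pos])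

lemma integral_one_sub_sq_rpow_half (m : ℕ) :
    ∫ s in (0 : ℝ)..1, (1 - s ^ 2) ^ ((m : ℝ) / 2) = cosPowIntegral (m + 1) := by
  have hsub := integral_comp_mul_deriv (a := 0) (b := π / 2)
    (g := fun s => (1 - s ^ 2) ^ ((m : ℝ) / 2))
    (fun x _ => hasDerivAt_sin x) continuous_cos.continuousOn
    ((continuous_rpow_const (by positivity)).comp (by fun_prop))
  rw [sin_zero, sin_pi_div_two] at hsub
  rw [← hsub, cosPowIntegral]
  refine integral_congr fun x hx => ?_
  have hcos := cos_nonneg_of_mem_uIcc_zero_pi_div_two hx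
  simp only [Function.comp_apply, ← cos_sq', ← rpow_natCast_mul hcos 2]
  rw [show ((2 : ℕ) : ℝ) * (m / 2) = m by push_cast; ring, rpow_natCast, pow_succ]

lemma integral_pow_mul_sqrt_one_sub_sq (m : ℕ) :
    ∫ u in (0 : ℝ)..1, u ^ m * √(1 - u ^ 2) = cosPowIntegral m / (m + 2) := by
  have hsub := integral_comp_mul_deriv (a := 0) (b := π / 2)
    (g := fun u => u ^ m * √(1 - u ^ 2))
    (fun x _ => hasDerivAt_cos x) continuous_sin.neg.continuousOn (by fun_prop)
  rw [cos_zero, cos_pi_div_two] at hsub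
  have hsin : EqOn (fun x => -(((fun u => u ^ m * √(1 - u ^ 2)) ∘ cos) x * -sin x))
      (fun x => cos x ^ m - cos x ^ (m + 2)) (uIcc 0 (π / 2)) := by
    intro x hx
    simp only [Function.comp_apply, ← sin_sq, sqrt_sq (sin_nonneg_of_mem_uIcc_zero_pi_div_two hx)]
    linear_combination cos x ^ m * sin_sq x
  rw [integral_symm, ← hsub, ← intervalIntegral.integral_neg, integral_congr hsin,
    intervalIntegral.integral_sub
    ((continuous_cos.fun_pow m).intervalIntegrable _ _)
    ((continuous_cos.fun_pow (m + 2)).intervalIntegrable _ _)]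
  have hrec := cosPowIntegral_add_two m
  simp only [cosPowIntegral] at hrec ⊢
  rw [hrec]
  field_simp
  ring

/-- The length of the slice `{t | r⁴ + t² < ε⁴}`. -/
def sliceWidth (ε r : ℝ) : ℝ := 2 * √(ε ^ 4 - r ^ 4)

lemma sliceWidth_mul (ε s : ℝ) : sliceWidth ε (ε * s) = ε ^ 2 * sliceWidth 1 s := by
  rw [sliceWidth, sliceWidth, show ε ^ 4 - (ε * s) ^ 4 = (ε ^ 2) ^ 2 * (1 - s ^ 4) by ring,
    sqrt_mul (by positivity), sqrt_sq (by positivity), one_pow]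
  ring

lemma sliceWidth_eq_zero_of_le {ε r : ℝ} (hε : 0 ≤ ε) (h : ε ≤ r) : sliceWidth ε r = 0 := by
  rw [sliceWidth, sqrt_eq_zero'.mpr (by linarith [pow_le_pow_left₀ hε h 4]), mul_zero]

lemma integral_pow_mul_sliceWidth_one (m : ℕ) :
    ∫ s in (0 : ℝ)..1, s ^ (2 * m + 1) * sliceWidth 1 s = cosPowIntegral m / (m + 2) := by
  have hsub := integral_comp_mul_deriv (a := 0) (b := 1) (f := fun s => s ^ 2)
    (g := fun u => u ^ m * √(1 - u ^ 2))
    (fun x _ => by simpa using hasDerivAt_pow 2 x) (by fun_prop) (by fun_prop)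
  norm_num at hsub
  rw [← integral_pow_mul_sqrt_one_sub_sq, ← hsub]
  refine integral_congr fun s _ => ?_
  simp only [sliceWidth]
  ring_nf

lemma integral_pow_mul_sliceWidth (m : ℕ) (ε : ℝ) :
    ∫ r in (0 : ℝ)..ε, r ^ (2 * m + 1) * sliceWidth ε r =
      ε ^ (2 * m + 4) * (cosPowIntegral m / (m + 2)) := by
  have hscale := smul_integral_comp_mul_left (a := 0) (b := 1)
    (fun r => r ^ (2 * m + 1) * sliceWidth ε r) ε
  simp only [mul_zero, mul_one, smul_eq_mul, sliceWidth_mul, mul_pow] at hscale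
  rw [← hscale, ← integral_pow_mul_sliceWidth_one, ← intervalIntegral.integral_const_mul,
    ← intervalIntegral.integral_const_mul]
  refine integral_congr fun s _ => ?_
  ring

lemma integral_Ioi_pow_mul_sliceWidth (m : ℕ) {ε : ℝ} (hε : 0 ≤ ε) :
    ∫ r in Ioi 0, r ^ (2 * m + 1) * sliceWidth ε r =
      ε ^ (2 * m + 4) * (cosPowIntegral m / (m + 2)) := by
  rw [← integral_pow_mul_sliceWidth, intervalIntegral.integral_of_le hε]
  refine setIntegral_eq_of_subset_of_forall_sdiff_eq_zero measurableSet_Ioi Ioc_subset_Ioi_self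
    fun r hr => ?_
  have hεr : ε ≤ r := le_of_lt (not_le.mp fun h => hr.2 ⟨hr.1, h⟩)
  rw [sliceWidth_eq_zero_of_le hε hεr, mul_zero]

end

lemma measureReal_setOf_add_sq_lt (a b : ℝ) :
    volume.real {t : ℝ | a + t ^ 2 < b} = 2 * √(b - a) := by
  have hset : {t : ℝ | a + t ^ 2 < b} = Ioo (-√(b - a)) √(b - a) := by
    ext t
    exact lt_sub_iff_add_lt'.symm.trans sq_lt
  rw [hset, measureReal_def, volume_Ioo, ENNReal.toReal_ofReal (by linarith [sqrt_nonneg (b - a)])]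
  ring

section

variable {E : Type*} [NormedAddCommGroup E] [MeasurableSpace E] [BorelSpace E] [ProperSpace E]
  (μ : Measure E) [IsFiniteMeasureOnCompacts μ]

lemma integrable_mul_sliceWidth_norm {ε : ℝ} (hε : 0 ≤ ε) {F : E → ℝ} (hF : Continuous F) :
    Integrable (fun z => F z * sliceWidth ε ‖z‖) μ := by
  refine hF.mul (by unfold sliceWidth; fun_prop) |>.integrable_of_hasCompactSupport <|
    HasCompactSupport.intro (isCompact_closedBall 0 ε) fun z hz => ?_
  rw [Metric.mem_closedBall, dist_zero_right, not_le] at hz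
  change F z * sliceWidth ε ‖z‖ = 0
  rw [sliceWidth_eq_zero_of_le hε hz.le, mul_zero]

lemma setIntegral_norm_pow_four_add_sq_lt [SFinite μ] {ε : ℝ} (hε : 0 ≤ ε) {F : E → ℝ}
    (hF : Continuous F) :
    ∫ p in {p : E × ℝ | ‖p.1‖ ^ 4 + p.2 ^ 2 < ε ^ 4}, F p.1 ∂(μ.prod volume) =
      ∫ z, F z * sliceWidth ε ‖z‖ ∂μ := by
  set S := {p : E × ℝ | ‖p.1‖ ^ 4 + p.2 ^ 2 < ε ^ 4}
  have hS : MeasurableSet S := (isOpen_lt (by fun_prop) continuous_const).measurableSet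
  have hS_sub : S ⊆ Metric.closedBall 0 ε ×ˢ Metric.closedBall 0 (ε ^ 2) := by
    rintro ⟨z, t⟩ h
    replace h : ‖z‖ ^ 4 + t ^ 2 < ε ^ 4 := h
    simp only [mem_prod, Metric.mem_closedBall, dist_zero_right, Real.norm_eq_abs]
    constructor
    · exact le_of_pow_le_pow_left₀ four_ne_zero hε (by nlinarith [sq_nonneg t])
    · exact abs_le_of_sq_le_sq (by nlinarith [pow_nonneg (norm_nonneg z) 4]) (by positivity)
  have hint : Integrable (S.indicator fun p => F p.1) (μ.prod volume) :=
    (integrable_indicator_iff hS).mpr <|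
      (((hF.comp continuous_fst).continuousOn).integrableOn_compact
        ((isCompact_closedBall _ _).prod (isCompact_closedBall _ _))).mono_set hS_sub
  rw [← MeasureTheory.integral_indicator hS, integral_prod _ hint]
  refine integral_congr_ae (Eventually.of_forall fun z => ?_)
  show ∫ t, S.indicator (fun p => F p.1) (z, t) = F z * sliceWidth ε ‖z‖
  have hslice : (fun t => S.indicator (fun p => F p.1) (z, t)) =
      {t : ℝ | ‖z‖ ^ 4 + t ^ 2 < ε ^ 4}.indicator fun _ => F z :=
    funext fun t => (indicator_comp_right (Prod.mk z)).symm
  rw [hslice, integral_indicator_const _ (measurableSet_lt (by fun_prop) measurable_const),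
    measureReal_setOf_add_sq_lt, smul_eq_mul, mul_comm, sliceWidth]

end

section

variable {ι : Type*} [Fintype ι]

lemma integral_sq_apply_mul_comp_norm_eq (g : ℝ → ℝ) (j j' : ι) :
    ∫ z : EuclideanSpace ℝ ι, z j ^ 2 * g ‖z‖ = ∫ z : EuclideanSpace ℝ ι, z j' ^ 2 * g ‖z‖ := by
  classical
  let σ := LinearIsometryEquiv.piLpCongrLeft 2 ℝ ℝ (Equiv.swap j j')
  rw [← integral_comp σ]
  congr with z
  rw [σ.norm_map]
  simp [σ]

lemma card_mul_integral_sq_apply_mul_sliceWidth {ε : ℝ} (hε : 0 ≤ ε) (j : ι) :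
    Fintype.card ι * ∫ z : EuclideanSpace ℝ ι, z j ^ 2 * sliceWidth ε ‖z‖ =
      ∫ z : EuclideanSpace ℝ ι, ‖z‖ ^ 2 * sliceWidth ε ‖z‖ := by
  simp_rw [EuclideanSpace.norm_sq_eq, Real.norm_eq_abs, sq_abs, Finset.sum_mul]
  rw [integral_finsetSum _ fun j' _ =>
      integrable_mul_sliceWidth_norm _ hε ((EuclideanSpace.proj j').continuous.pow 2)]
  simp [integral_sq_apply_mul_comp_norm_eq _ _ j]

end

section

variable {E : Type*} [NormedAddCommGroup E] [NormedSpace ℝ E] [FiniteDimensional ℝ E]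
  [MeasurableSpace E] [BorelSpace E] (μ : Measure E) [μ.IsAddHaarMeasure]

lemma integral_norm_pow_mul_sliceWidth {m : ℕ} (hE : Module.finrank ℝ E = 2 * (m + 1))
    (k : ℕ) {ε : ℝ} (hε : 0 ≤ ε) :
    ∫ z, ‖z‖ ^ (2 * k) * sliceWidth ε ‖z‖ ∂μ =
      2 * (m + 1) * μ.real (Metric.ball 0 1) *
        (ε ^ (2 * (m + k) + 4) * (cosPowIntegral (m + k) / (m + k + 2))) := by
  have : Nontrivial E := Module.nontrivial_of_finrank_eq_succ (n := 2 * m + 1) (by omega)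
  have hpow (y : ℝ) : y ^ (2 * (m + 1) - 1) • (y ^ (2 * k) * sliceWidth ε y) =
      y ^ (2 * (m + k) + 1) * sliceWidth ε y := by
    rw [smul_eq_mul, ← mul_assoc, ← pow_add]
    congr 2
    omega
  rw [integral_fun_norm_addHaar μ fun r => r ^ (2 * k) * sliceWidth ε r, hE]
  simp_rw [hpow, integral_Ioi_pow_mul_sliceWidth _ hε, nsmul_eq_mul, smul_eq_mul]
  push_cast
  ring

end

abbrev HorizontalSpace (n : ℕ) := EuclideanSpace ℝ (Fin n ⊕ Fin n)

def horizontal {n : ℕ} (P : Heis n) : HorizontalSpace n := WithLp.toLp 2 (Sum.elim P.1 P.2.1)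

lemma hGauge_eq_norm_horizontal {n : ℕ} (P : Heis n) :
    hGauge P = (‖horizontal P‖ ^ 4 + P.2.2 ^ 2) ^ ((1 : ℝ) / 4) := by
  rw [hGauge, show ‖horizontal P‖ ^ 4 = (‖horizontal P‖ ^ 2) ^ 2 by ring,
    EuclideanSpace.norm_sq_eq]
  simp [horizontal, Fintype.sum_sum_type]

lemma hBall_hOne_eq {n : ℕ} {ε : ℝ} (hε : 0 ≤ ε) :
    hBall (hOne : Heis n) ε = {P | ‖horizontal P‖ ^ 4 + P.2.2 ^ 2 < ε ^ 4} := by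
  have hmul (P : Heis n) : hMul (hInv hOne) P = P := by simp [hMul, hInv, hOne]
  ext P
  change hGauge (hMul (hInv hOne) P) < ε ↔ ‖horizontal P‖ ^ 4 + P.2.2 ^ 2 < ε ^ 4
  rw [hmul, hGauge_eq_norm_horizontal, one_div, rpow_inv_lt_iff_of_pos (by positivity) hε four_pos]
  norm_cast

def heisEquiv (n : ℕ) : HorizontalSpace n × ℝ ≃ᵐ Heis n :=
  ((((MeasurableEquiv.toLp 2 ((Fin n ⊕ Fin n) → ℝ)).symm).trans
      (MeasurableEquiv.sumPiEquivProdPi (fun _ => ℝ))).prodCongr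
    (MeasurableEquiv.refl ℝ)).trans MeasurableEquiv.prodAssoc

lemma measurePreserving_heisEquiv (n : ℕ) : MeasurePreserving (heisEquiv n) := by
  have h := ((volume_measurePreserving_sumPiEquivProdPi fun _ : Fin n ⊕ Fin n => ℝ).comp
    (EuclideanSpace.volume_preserving_symm_measurableEquiv_toLp _)).prod
      (MeasurePreserving.id (volume : Measure ℝ))
  exact volume_preserving_prodAssoc.comp h

lemma horizontal_heisEquiv {n : ℕ} (p : HorizontalSpace n × ℝ) :
    horizontal (heisEquiv n p) = p.1 := by
  ext (j | j) <;> rfl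

lemma setIntegral_hBall_comp_horizontal {n : ℕ} {ε : ℝ} (hε : 0 ≤ ε) {F : HorizontalSpace n → ℝ}
    (hF : Continuous F) :
    ∫ P in hBall (hOne : Heis n) ε, F (horizontal P) = ∫ z, F z * sliceWidth ε ‖z‖ := by
  have hpre : heisEquiv n ⁻¹' hBall hOne ε = {p | ‖p.1‖ ^ 4 + p.2 ^ 2 < ε ^ 4} := by
    rw [hBall_hOne_eq hε]
    ext p
    change ‖horizontal (heisEquiv n p)‖ ^ 4 + p.2 ^ 2 < ε ^ 4 ↔ _
    rw [horizontal_heisEquiv]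
    rfl
  rw [← (measurePreserving_heisEquiv n).setIntegral_preimage_emb
    (heisEquiv n).measurableEmbedding, hpre]
  simp only [horizontal_heisEquiv]
  exact setIntegral_norm_pow_four_add_sq_lt volume hε hF

lemma finrank_horizontalSpace (n : ℕ) : Module.finrank ℝ (HorizontalSpace n) = 2 * n := by
  simp [two_mul]

lemma setIntegral_hBall_sq_add_sq {m : ℕ} {ε : ℝ} (hε : 0 ≤ ε) (i : Fin (m + 1)) :
    ∫ P in hBall (hOne : Heis (m + 1)) ε, ((P.1 i) ^ 2 + (P.2.1 i) ^ 2) =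
      2 * volume.real (Metric.ball (0 : HorizontalSpace (m + 1)) 1) *
        (ε ^ (2 * (m + 1) + 4) * (cosPowIntegral (m + 1) / (m + 1 + 2))) := by
  have hcoord (j : Fin (m + 1) ⊕ Fin (m + 1)) :
      Continuous fun z : HorizontalSpace (m + 1) => z j ^ 2 :=
    (EuclideanSpace.proj j).continuous.pow 2
  have hcard := card_mul_integral_sq_apply_mul_sliceWidth hε
    (Sum.inl i : Fin (m + 1) ⊕ Fin (m + 1))
  rw [integral_norm_pow_mul_sliceWidth volume (finrank_horizontalSpace _) 1 hε,
    Fintype.card_sum, Fintype.card_fin] at hcard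
  push_cast at hcard
  refine (setIntegral_hBall_comp_horizontal hε
    (F := fun z => z (Sum.inl i) ^ 2 + z (Sum.inr i) ^ 2) ((hcoord _).add (hcoord _))).trans ?_
  simp_rw [add_mul]
  rw [integral_add (integrable_mul_sliceWidth_norm _ hε (hcoord _))
      (integrable_mul_sliceWidth_norm _ hε (hcoord _)),
    integral_sq_apply_mul_comp_norm_eq _ (Sum.inr i) (Sum.inl i), ← two_mul]
  apply mul_left_cancel₀ (by positivity : (m : ℝ) + 1 ≠ 0)
  linear_combination hcard

lemma volume_hBall_toReal {m : ℕ} {ε : ℝ} (hε : 0 ≤ ε) :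
    (volume (hBall (hOne : Heis (m + 1)) ε)).toReal =
      2 * (m + 1) * volume.real (Metric.ball (0 : HorizontalSpace (m + 1)) 1) *
        (ε ^ (2 * m + 4) * (cosPowIntegral m / (m + 2))) := by
  have h := setIntegral_hBall_comp_horizontal (n := m + 1) hε (F := fun _ => (1 : ℝ))
    continuous_const
  rw [setIntegral_const, smul_eq_mul, mul_one] at h
  rw [← measureReal_def, h]
  simpa using integral_norm_pow_mul_sliceWidth volume (finrank_horizontalSpace (m + 1)) 0 hε

theorem second_moment_gauge_ball_general (n : ℕ) (ε : ℝ) (hε : 0 < ε) (i : Fin n) :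
    ∫ P in hBall (hOne : Heis n) ε, ((P.1 i) ^ 2 + (P.2.1 i) ^ 2) =
      (1 / ((n : ℝ) + 1)) *
        ((∫ s in (0:ℝ)..1, (1 - s ^ 2) ^ (((n : ℝ) + 1) / 2)) /
          ∫ s in (0:ℝ)..1, (1 - s ^ 2) ^ ((n : ℝ) / 2)) *
        (volume (hBall (hOne : Heis n) ε)).toReal * ε ^ 2 := by
  obtain ⟨m, rfl⟩ := Nat.exists_eq_add_one_of_ne_zero i.pos.ne'
  rw [setIntegral_hBall_sq_add_sq hε.le, volume_hBall_toReal hε.le,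
    show (((m + 1 : ℕ) : ℝ) + 1) / 2 = ((m + 2 : ℕ) : ℝ) / 2 by push_cast; ring,
    integral_one_sub_sq_rpow_half, integral_one_sub_sq_rpow_half,
    cosPowIntegral_add_two (m + 1), cosPowIntegral_add_two m]
  have hW := (cosPowIntegral_pos m).ne'
  push_cast
  field_simp
  ring

/-- Second moments of the gauge ball: for each coordinate index `i`,
`∫_{B(0,ε)} (x_i² + y_i²) = (1/(n+1)) · (∫₀¹(1−s²)^{(n+1)/2}/∫₀¹(1−s²)^{n/2}) · |B(0,ε)| · ε²`. -/
theorem second_moment_gauge_ball (n : ℕ) (hn : 1 ≤ n) (ε : ℝ) (hε : 0 < ε) (i : Fin n) :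
    ∫ P in hBall (hOne : Heis n) ε, ((P.1 i) ^ 2 + (P.2.1 i) ^ 2) =
      (1 / ((n : ℝ) + 1)) *
        ((∫ s in (0:ℝ)..1, (1 - s ^ 2) ^ (((n : ℝ) + 1) / 2)) /
          ∫ s in (0:ℝ)..1, (1 - s ^ 2) ^ ((n : ℝ) / 2)) *
        (volume (hBall (hOne : Heis n) ε)).toReal * ε ^ 2 :=
  second_moment_gauge_ball_general n ε hε i
end
end

section
/- Let u be C¹ near 0 with ∇_ℍ u(0) ≠ 0, and for small ε>0 let P_ε=(x_ε,y_ε,t_ε) be a point of maximum of u on the closed gauge ball B̄(0,ε). Then |t_ε|/ε³ → 2|∂_t u(0)| / |∇_ℍ u(0)| as ε→0. -/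
open MeasureTheory Filter Topology

noncomputable section

/-!
For small `ε` the gradient of `u` at `P_ε` stays away from zero, so `P_ε` lies on the sphere
`ρ = ε⁴` of `ρ = s² + t²`, `s = |x|² + |y|²`, and the Lagrange condition reads
`∇u(P_ε) = λ ∇ρ(P_ε) = λ (4s x, 4s y, 2t)`. Eliminating `λ` gives
`|t| · |∇_{x,y} u(P_ε)| = 2 |∂_t u(P_ε)| s^{3/2}`. As `s ≤ ε²`, this forces `t = O(ε³)`, hence
`s / ε² → 1`, and `|t| / ε³ → 2 |∂_t u(0)| / |∇_ℍ u(0)|` by continuity of `∇u`, since the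
Euclidean and horizontal gradients agree at the origin.
-/

section Lagrange

variable {E : Type*} [NormedAddCommGroup E] [NormedSpace ℝ E] {f g : E → ℝ}
  {f' g' : StrongDual ℝ E} {x : E}

theorem IsMaxOn.apply_eq_of_sublevel {c : ℝ} (hmax : IsMaxOn f {y | g y ≤ c} x) (hx : g x ≤ c)
    (hg : ContinuousAt g x) (hf : HasFDerivAt f f' x) (hf' : f' ≠ 0) : g x = c := by
  refine hx.eq_of_not_lt fun hlt => hf' ?_
  have hloc : IsLocalMax f x :=
    (hg.eventually (gt_mem_nhds hlt)).mono fun y hy => hmax hy.le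
  exact hloc.hasFDerivAt_eq_zero hf

theorem IsMaxOn.exists_eq_smul_of_level [CompleteSpace E] (hmax : IsMaxOn f {y | g y = g x} x)
    (hf : HasStrictFDerivAt f f' x) (hg : HasStrictFDerivAt g g' x) (hg' : g' ≠ 0) :
    ∃ r : ℝ, f' = r • g' := by
  obtain ⟨a, b, hab, hlin⟩ :=
    IsLocalExtrOn.exists_multipliers_of_hasStrictFDerivAt_1d (Or.inr hmax.localize) hg hf
  have hb : b ≠ 0 := by
    rintro rfl
    have ha : a ≠ 0 := by simpa using hab
    exact hg' (by simpa [ha] using hlin)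
  refine ⟨-a / b, ContinuousLinearMap.ext fun v => ?_⟩
  have hv := congrArg (fun L : StrongDual ℝ E => L v) hlin
  simp only [add_apply, smul_apply, smul_eq_mul, zero_apply] at hv
  simp only [smul_apply, smul_eq_mul]
  field_simp
  linarith

end Lagrange

theorem tendsto_abs_div_pow_three_of_sq_add_sq {s t q : ℝ → ℝ} {κ : ℝ}
    (hq : Tendsto q (𝓝[>] 0) (𝓝 κ)) (hs : ∀ᶠ ε in 𝓝[>] 0, 0 ≤ s ε)
    (hst : ∀ᶠ ε in 𝓝[>] 0, s ε ^ 2 + t ε ^ 2 = ε ^ 4)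
    (ht : ∀ᶠ ε in 𝓝[>] 0, |t ε| = q ε * (s ε * √(s ε))) :
    Tendsto (fun ε => |t ε| / ε ^ 3) (𝓝[>] 0) (𝓝 κ) := by
  have hpos : ∀ᶠ ε in 𝓝[>] (0:ℝ), 0 < ε := self_mem_nhdsWithin
  have hsqrt_div : ∀ᶠ ε in 𝓝[>] (0:ℝ), √(s ε / ε ^ 2) = √(s ε) / ε := by
    filter_upwards [hpos] with ε hε
    rw [Real.sqrt_div' _ (by positivity), Real.sqrt_sq hε.le]
  -- `s ≤ ε²` gives `|t| ≤ |q| ε³`, so `(t / ε²)² → 0` and hence `(s / ε²)² → 1`.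
  have ht0 : Tendsto (fun ε => t ε / ε ^ 2) (𝓝[>] 0) (𝓝 0) := by
    refine squeeze_zero_norm' ?_ (by simpa using hq.norm.mul (nhdsWithin_le_nhds (a := (0:ℝ))))
    filter_upwards [hpos, hs, hst, ht] with ε hε hs hst ht
    have hsε : s ε ≤ ε ^ 2 := (sq_le_sq₀ hs (by positivity)).1 (by nlinarith [sq_nonneg (t ε)])
    have hsqrtε : √(s ε) ≤ ε := (Real.sqrt_le_left hε.le).2 hsε
    rw [norm_div, norm_pow, Real.norm_of_nonneg hε.le, div_le_iff₀ (by positivity),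
      Real.norm_eq_abs, ht]
    calc q ε * (s ε * √(s ε)) ≤ ‖q ε‖ * (ε ^ 2 * ε) := by gcongr; exact le_abs_self _
      _ = ‖q ε‖ * ε * ε ^ 2 := by ring
  have hσ : Tendsto (fun ε => s ε / ε ^ 2) (𝓝[>] 0) (𝓝 1) := by
    refine Tendsto.congr' ?_
      (by simpa using (tendsto_const_nhds (x := (1:ℝ)).sub (ht0.pow 2)).sqrt)
    filter_upwards [hpos, hs, hst] with ε hε hs hst
    rw [← Real.sqrt_sq (by positivity : 0 ≤ s ε / ε ^ 2)]
    congr 1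
    field_simp
    linarith
  have hlim := hq.mul (hσ.mul hσ.sqrt)
  rw [Real.sqrt_one, mul_one, mul_one] at hlim
  refine hlim.congr' ?_
  filter_upwards [hsqrt_div, ht] with ε hsqrt ht
  rw [hsqrt, ht]
  field_simp

namespace Heis

variable {n : ℕ}

def horizSq (P : Heis n) : ℝ := ∑ i, P.1 i ^ 2 + ∑ i, P.2.1 i ^ 2

/-- `hGauge P ^ 4`, which unlike the gauge is smooth. -/
def gauge4 (P : Heis n) : ℝ := horizSq P ^ 2 + P.2.2 ^ 2

lemma horizSq_nonneg (P : Heis n) : 0 ≤ horizSq P := by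
  unfold horizSq; positivity

lemma mem_hClosedBall_hOne_iff {ε : ℝ} (hε : 0 ≤ ε) {Q : Heis n} :
    Q ∈ hClosedBall hOne ε ↔ gauge4 Q ≤ ε ^ 4 := by
  have hQ : hMul (hInv hOne) Q = Q := by simp [hMul, hInv, hOne]
  rw [hClosedBall, Set.mem_ofPred_eq, hQ, hGauge, one_div,
    Real.rpow_inv_le_iff_of_pos (by positivity) hε (by norm_num)]
  norm_cast

lemma sq_fst_le_horizSq (Q : Heis n) (i : Fin n) : Q.1 i ^ 2 ≤ horizSq Q :=
  le_add_of_le_of_nonneg (Finset.single_le_sum (fun j _ => sq_nonneg (Q.1 j)) (Finset.mem_univ i))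
    (by positivity)

lemma sq_snd_fst_le_horizSq (Q : Heis n) (i : Fin n) : Q.2.1 i ^ 2 ≤ horizSq Q :=
  le_add_of_nonneg_of_le (by positivity)
    (Finset.single_le_sum (fun j _ => sq_nonneg (Q.2.1 j)) (Finset.mem_univ i))

lemma horizSq_le_of_gauge4_le {ε : ℝ} {Q : Heis n} (h : gauge4 Q ≤ ε ^ 4) :
    horizSq Q ≤ ε ^ 2 :=
  (sq_le_sq₀ (horizSq_nonneg Q) (by positivity)).1
    (by unfold gauge4 at h; nlinarith [sq_nonneg Q.2.2])

lemma abs_t_le_of_gauge4_le {ε : ℝ} {Q : Heis n} (h : gauge4 Q ≤ ε ^ 4) :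
    |Q.2.2| ≤ ε ^ 2 :=
  abs_le_of_sq_le_sq (by unfold gauge4 at h; nlinarith [sq_nonneg (horizSq Q), sq_abs Q.2.2])
    (by positivity)

lemma norm_le_of_gauge4_le {ε : ℝ} (hε : 0 ≤ ε) {Q : Heis n} (h : gauge4 Q ≤ ε ^ 4) :
    ‖Q‖ ≤ ε + ε ^ 2 := by
  have hcoord : ∀ a : ℝ, a ^ 2 ≤ horizSq Q → ‖a‖ ≤ ε := fun a ha =>
    abs_le_of_sq_le_sq (ha.trans (horizSq_le_of_gauge4_le h)) hε
  have hx : ‖Q.1‖ ≤ ε :=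
    (pi_norm_le_iff_of_nonneg hε).2 fun i => hcoord _ (sq_fst_le_horizSq Q i)
  have hy : ‖Q.2.1‖ ≤ ε :=
    (pi_norm_le_iff_of_nonneg hε).2 fun i => hcoord _ (sq_snd_fst_le_horizSq Q i)
  have ht : ‖Q.2.2‖ ≤ ε ^ 2 := abs_t_le_of_gauge4_le h
  simp only [Prod.norm_def, max_le_iff]
  refine ⟨?_, ?_, ?_⟩ <;> nlinarith [sq_nonneg ε]

lemma tendsto_zero_of_mem_hClosedBall {P : ℝ → Heis n}
    (hP : ∀ᶠ ε in 𝓝[>] 0, P ε ∈ hClosedBall hOne ε) : Tendsto P (𝓝[>] 0) (𝓝 0) := by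
  have hbound : Tendsto (fun ε : ℝ => ε + ε ^ 2) (𝓝[>] 0) (𝓝 0) :=
    tendsto_nhdsWithin_of_tendsto_nhds <|
      (continuous_id.add (continuous_pow 2)).tendsto' 0 0 (by simp)
  refine tendsto_zero_iff_norm_tendsto_zero.2 <|
    squeeze_zero' (Eventually.of_forall fun _ => norm_nonneg _) ?_ hbound
  filter_upwards [hP, self_mem_nhdsWithin] with ε hε hpos
  exact norm_le_of_gauge4_le hpos.le ((mem_hClosedBall_hOne_iff hpos.le).1 hε)

def coordX (i : Fin n) : Heis n →L[ℝ] ℝ :=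
  (ContinuousLinearMap.proj i).comp (ContinuousLinearMap.fst ℝ _ _)

def coordY (i : Fin n) : Heis n →L[ℝ] ℝ :=
  ((ContinuousLinearMap.proj i).comp (ContinuousLinearMap.fst ℝ _ _)).comp
    (ContinuousLinearMap.snd ℝ _ _)

def coordT : Heis n →L[ℝ] ℝ :=
  (ContinuousLinearMap.snd ℝ _ _).comp (ContinuousLinearMap.snd ℝ _ _)

@[simp] lemma coordX_apply (i : Fin n) (v : Heis n) : coordX i v = v.1 i := rfl
@[simp] lemma coordY_apply (i : Fin n) (v : Heis n) : coordY i v = v.2.1 i := rfl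
@[simp] lemma coordT_apply (v : Heis n) : coordT v = v.2.2 := rfl

def gauge4Deriv (P : Heis n) : Heis n →L[ℝ] ℝ :=
  (4 * horizSq P) • (∑ i, P.1 i • coordX i + ∑ i, P.2.1 i • coordY i) + (2 * P.2.2) • coordT

lemma gauge4Deriv_apply (P v : Heis n) :
    gauge4Deriv P v =
      4 * horizSq P * (∑ i, P.1 i * v.1 i + ∑ i, P.2.1 i * v.2.1 i) + 2 * P.2.2 * v.2.2 := by
  simp only [gauge4Deriv, add_apply, smul_apply, sum_apply, coordX_apply, coordY_apply,
    coordT_apply, smul_eq_mul]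

lemma hasStrictFDerivAt_horizSq (P : Heis n) :
    HasStrictFDerivAt horizSq
      ((2 : ℝ) • (∑ i, P.1 i • coordX i + ∑ i, P.2.1 i • coordY i)) P := by
  have hX := HasStrictFDerivAt.fun_sum (u := Finset.univ) fun i _ =>
    ((coordX i).hasStrictFDerivAt (x := P)).pow 2
  have hY := HasStrictFDerivAt.fun_sum (u := Finset.univ) fun i _ =>
    ((coordY i).hasStrictFDerivAt (x := P)).pow 2
  refine (hX.add hY).congr_fderiv (ContinuousLinearMap.ext fun v => ?_)
  simp only [add_apply, sum_apply, smul_apply, coordX_apply, coordY_apply, smul_eq_mul,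
    nsmul_eq_mul, Nat.cast_ofNat, Nat.add_one_sub_one, pow_one, mul_add, Finset.mul_sum]
  congr 1 <;> exact Finset.sum_congr rfl fun i _ => by ring

lemma hasStrictFDerivAt_gauge4 (P : Heis n) :
    HasStrictFDerivAt gauge4 (gauge4Deriv P) P := by
  refine (((hasStrictFDerivAt_horizSq P).pow 2).add
    ((coordT (n := n)).hasStrictFDerivAt.pow 2)).congr_fderiv (ContinuousLinearMap.ext fun v => ?_)
  simp only [gauge4Deriv, add_apply, sum_apply, smul_apply, coordX_apply, coordY_apply,
    coordT_apply, smul_eq_mul, nsmul_eq_mul, Nat.cast_ofNat, Nat.add_one_sub_one, pow_one]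
  ring

/-- Euler's identity for `gauge4`, homogeneous of degree 4 under the dilations `hDil`. -/
lemma gauge4Deriv_apply_self (P : Heis n) :
    gauge4Deriv P (P.1, P.2.1, 2 * P.2.2) = 4 * gauge4 P := by
  simp only [gauge4Deriv_apply, gauge4, horizSq, ← sq]
  ring

lemma gauge4Deriv_ne_zero {P : Heis n} (hP : gauge4 P ≠ 0) : gauge4Deriv P ≠ 0 := fun h0 => by
  simpa [h0, hP] using (gauge4Deriv_apply_self P).symm

def eX (i : Fin n) : Heis n := (Pi.single i 1, 0, 0)
def eY (i : Fin n) : Heis n := (0, Pi.single i 1, 0)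
def eT : Heis n := (0, 0, 1)

lemma gauge4Deriv_eX (P : Heis n) (i : Fin n) :
    gauge4Deriv P (eX i) = 4 * horizSq P * P.1 i := by
  simp [gauge4Deriv_apply, eX, Pi.single_apply]

lemma gauge4Deriv_eY (P : Heis n) (i : Fin n) :
    gauge4Deriv P (eY i) = 4 * horizSq P * P.2.1 i := by
  simp [gauge4Deriv_apply, eY, Pi.single_apply]

lemma gauge4Deriv_eT (P : Heis n) : gauge4Deriv P eT = 2 * P.2.2 := by
  simp [gauge4Deriv_apply, eT]

/-- The Euclidean norm of the `(x, y)`-part of a covector. For `A = fderiv ℝ u P` it is built from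
`∂_{x_i} u, ∂_{y_i} u`, which agree with `X_i u, Y_i u` only where `x = y = 0`. -/
def horizNorm (A : Heis n →L[ℝ] ℝ) : ℝ :=
  √(∑ i, A (eX i) ^ 2 + ∑ i, A (eY i) ^ 2)

lemma continuous_horizNorm : Continuous (horizNorm (n := n)) := by
  unfold horizNorm; fun_prop

lemma hGradNorm_zero_eq (u : Heis n → ℝ) : hGradNorm u 0 = horizNorm (fderiv ℝ u 0) := by
  simp [hGradNorm, horizNorm, Xd, Yd, eX, eY]

lemma hGradNorm_pos {u : Heis n → ℝ} {P : Heis n}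
    (h : ((fun i => Xd i u P, fun i => Yd i u P) : (Fin n → ℝ) × (Fin n → ℝ)) ≠ 0) :
    0 < hGradNorm u P := by
  refine Real.sqrt_pos.2 <| lt_of_le_of_ne (by positivity) fun h0 => h ?_
  rw [eq_comm, add_eq_zero_iff_of_nonneg (by positivity) (by positivity),
    Finset.sum_eq_zero_iff_of_nonneg (fun _ _ => sq_nonneg _),
    Finset.sum_eq_zero_iff_of_nonneg (fun _ _ => sq_nonneg _)] at h0
  ext i
  · simpa using h0.1 i (Finset.mem_univ i)
  · simpa using h0.2 i (Finset.mem_univ i)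

lemma horizSq_smul (c : ℝ) (P : Heis n) : horizSq (c • P) = c ^ 2 * horizSq P := by
  simp only [horizSq, Prod.smul_fst, Prod.smul_snd, Pi.smul_apply, smul_eq_mul, mul_pow,
    ← Finset.mul_sum, mul_add]

lemma abs_t_mul_horizNorm_eq {P : Heis n} {A : Heis n →L[ℝ] ℝ} {r : ℝ}
    (hA : A = r • gauge4Deriv P) :
    |P.2.2| * horizNorm A = 2 * |A eT| * (horizSq P * √(horizSq P)) := by
  have hsum : ∑ i, A (eX i) ^ 2 + ∑ i, A (eY i) ^ 2 = horizSq ((4 * r * horizSq P) • P) := by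
    rw [horizSq]
    congr 1 <;> refine Finset.sum_congr rfl fun i _ => ?_ <;>
      simp only [hA, smul_apply, gauge4Deriv_eX, gauge4Deriv_eY, smul_eq_mul, Prod.smul_fst,
        Prod.smul_snd, Pi.smul_apply] <;> ring
  rw [horizNorm, hsum, horizSq_smul, Real.sqrt_mul (sq_nonneg _), Real.sqrt_sq_eq_abs, hA,
    smul_apply, gauge4Deriv_eT, smul_eq_mul]
  simp only [abs_mul, abs_of_nonneg (horizSq_nonneg P), abs_two,
    abs_of_pos (four_pos : (0:ℝ) < 4)]
  ring

theorem gauge4_eq_and_exists_eq_smul_of_isMaxOn {u : Heis n → ℝ} {A : Heis n →L[ℝ] ℝ}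
    {P : Heis n} {ε : ℝ} (hε : 0 < ε) (hP : P ∈ hClosedBall hOne ε)
    (hmax : IsMaxOn u (hClosedBall hOne ε) P)
    (hu : HasStrictFDerivAt u A P) (hA : A ≠ 0) :
    gauge4 P = ε ^ 4 ∧ ∃ r : ℝ, A = r • gauge4Deriv P := by
  have hball : hClosedBall (hOne : Heis n) ε = {Q | gauge4 Q ≤ ε ^ 4} :=
    Set.ext fun Q => mem_hClosedBall_hOne_iff hε.le
  rw [hball] at hP hmax
  have hsphere : gauge4 P = ε ^ 4 :=
    hmax.apply_eq_of_sublevel hP (hasStrictFDerivAt_gauge4 P).continuousAt hu.hasFDerivAt hA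
  refine ⟨hsphere, (hmax.on_subset fun Q hQ => ?_).exists_eq_smul_of_level hu
    (hasStrictFDerivAt_gauge4 P) (gauge4Deriv_ne_zero ?_)⟩
  · exact le_of_eq (hQ.trans hsphere)
  · rw [hsphere]; positivity

end Heis

open Heis

/-- Vertical component of maximizers: if `∇_ℍ u(0) ≠ 0` and `P_ε = (x_ε, y_ε, t_ε)`
maximizes `u` over `B̄(0,ε)`, then `|t_ε|/ε³ → 2|∂_t u(0)|/|∇_ℍ u(0)|` as `ε → 0⁺`. -/
theorem maximizer_vertical_component (n : ℕ) (u : Heis n → ℝ) (hu : ContDiffAt ℝ 1 u 0)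
    (hgrad : ((fun i => Xd i u 0, fun i => Yd i u 0) : (Fin n → ℝ) × (Fin n → ℝ)) ≠ 0)
    (ε₀ : ℝ) (hε₀ : 0 < ε₀) (Pmax : ℝ → Heis n)
    (hmem : ∀ ε ∈ Set.Ioo (0:ℝ) ε₀, Pmax ε ∈ hClosedBall (hOne : Heis n) ε)
    (hmax : ∀ ε ∈ Set.Ioo (0:ℝ) ε₀, IsMaxOn u (hClosedBall (hOne : Heis n) ε) (Pmax ε)) :
    Tendsto (fun ε => |(Pmax ε).2.2| / ε ^ 3) (𝓝[>] (0:ℝ))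
      (𝓝 (2 * |Td u 0| / hGradNorm u 0)) := by
  have hsmall : ∀ᶠ ε in 𝓝[>] (0:ℝ), ε ∈ Set.Ioo 0 ε₀ := Ioo_mem_nhdsGT hε₀
  have hP0 : Tendsto Pmax (𝓝[>] 0) (𝓝 0) := tendsto_zero_of_mem_hClosedBall (hsmall.mono hmem)
  have hA : Tendsto (fun ε => fderiv ℝ u (Pmax ε)) (𝓝[>] 0) (𝓝 (fderiv ℝ u 0)) :=
    (hu.continuousAt_fderiv one_ne_zero).tendsto.comp hP0
  have hN0 : 0 < horizNorm (fderiv ℝ u 0) := hGradNorm_zero_eq u ▸ hGradNorm_pos hgrad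
  have hN : Tendsto (fun ε => horizNorm (fderiv ℝ u (Pmax ε))) (𝓝[>] 0)
      (𝓝 (horizNorm (fderiv ℝ u 0))) := (continuous_horizNorm.tendsto _).comp hA
  have hNpos := hN.eventually (eventually_gt_nhds hN0)
  have hq : Tendsto (fun ε => 2 * |fderiv ℝ u (Pmax ε) eT| / horizNorm (fderiv ℝ u (Pmax ε)))
      (𝓝[>] 0) (𝓝 (2 * |Td u 0| / hGradNorm u 0)) := by
    rw [hGradNorm_zero_eq]
    exact ((((ContinuousLinearMap.apply ℝ ℝ eT).continuous.tendsto _).comp hA).abs.const_mul 2).div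
      hN hN0.ne'
  have hstrict : ∀ᶠ ε in 𝓝[>] 0, HasStrictFDerivAt u (fderiv ℝ u (Pmax ε)) (Pmax ε) :=
    hP0.eventually ((hu.eventually (by simp)).mono fun P hP => hP.hasStrictFDerivAt one_ne_zero)
  have hLagrange : ∀ᶠ ε in 𝓝[>] 0, gauge4 (Pmax ε) = ε ^ 4 ∧
      ∃ r : ℝ, fderiv ℝ u (Pmax ε) = r • gauge4Deriv (Pmax ε) := by
    filter_upwards [hsmall, hstrict, hNpos] with ε hε hf hN
    refine gauge4_eq_and_exists_eq_smul_of_isMaxOn hε.1 (hmem ε hε) (hmax ε hε) hf fun h0 => ?_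
    simp [h0, horizNorm] at hN
  refine tendsto_abs_div_pow_three_of_sq_add_sq hq (s := fun ε => horizSq (Pmax ε))
    (Eventually.of_forall fun _ => horizSq_nonneg _) (hLagrange.mono fun _ h => h.1) ?_
  filter_upwards [hLagrange, hNpos] with ε ⟨_, r, hr⟩ hN
  rw [div_mul_eq_mul_div, eq_div_iff hN.ne', ← abs_t_mul_horizNorm_eq hr]
end
end

section
/- Let φ be C² near 0 ∈ ℝ^{2n+1}, and let P_{ε,M}=(x_{ε},y_{ε},t_{ε}) maximize φ on B̄(0,ε). Then φ(P_{ε,M}) + φ(−P_{ε,M}) = 2φ(0) + ⟨D²_ℍφ(0)(x_ε,y_ε),(x_ε,y_ε)⟩ + o(ε²) as ε→0, and consequently max_{B̄(0,ε)}φ + min_{B̄(0,ε)}φ ≤ 2φ(0) + ⟨D²_ℍφ(0)(x_ε,y_ε),(x_ε,y_ε)⟩ + o(ε²). -/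
open MeasureTheory Filter Topology

noncomputable section

/-!
Peano's second-order expansion at `0` gives `φ(P) + φ(-P) - 2φ(0) = D²φ(0)(P, P) + o(‖P‖²)`,
the first-order terms cancelling. On the gauge ball `B̄(0, ε)` the horizontal part `(x, y, 0)` of
`P` is `O(ε)` and the vertical part `(0, 0, t)` is `O(ε²)`, so `D²φ(0)(P, P)` differs from its value
at the horizontal part by `o(ε²)`. At a horizontal vector the Euclidean Hessian and the horizontal
one have the same quadratic form: the terms `∓2δᵢⱼ ∂ₜφ(0)` in `XᵢYⱼφ(0)` and `YᵢXⱼφ(0)` cancel.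
Finally `min φ ≤ φ(-P)` because gauge balls centred at `0` are symmetric.
-/

open Asymptotics

section Taylor

variable {E F : Type*} [NormedAddCommGroup E] [NormedSpace ℝ E]
  [NormedAddCommGroup F] [NormedSpace ℝ F]

theorem ContinuousLinearMap.hasFDerivAt_half_apply_self {B : E →L[ℝ] E →L[ℝ] F}
    (hB : ∀ v w, B v w = B w v) (k : E) :
    HasFDerivAt (fun k => (2 : ℝ)⁻¹ • B k k) (B k) k := by
  refine ((B.hasFDerivAt.clm_apply (hasFDerivAt_id k)).const_smul (2 : ℝ)⁻¹).congr_fderiv ?_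
  ext v
  simp only [smul_apply, add_apply, coe_comp, coe_id', Function.comp_apply, id_eq, flip_apply,
    hB v k]
  module

variable {f : E → F} {x : E}

theorem ContDiffAt.isLittleO_taylor_two (hf : ContDiffAt ℝ 2 f x) :
    (fun h => f (x + h) - f x - fderiv ℝ f x h - (2 : ℝ)⁻¹ • fderiv ℝ (fderiv ℝ f) x h h)
      =o[𝓝 0] fun h => ‖h‖ ^ 2 := by
  set f'' := fderiv ℝ (fderiv ℝ f) x
  have hf'' : HasFDerivAt (fderiv ℝ f) f'' x :=
    ((hf.fderiv_right le_rfl).differentiableAt one_ne_zero).hasFDerivAt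
  obtain ⟨r, hr, hdiff⟩ : ∃ r > 0, ∀ k ∈ Metric.ball (0 : E) r, DifferentiableAt ℝ f (x + k) := by
    have h := (hf.eventually (by simp)).mono fun y hy => hy.differentiableAt (by simp)
    rw [← map_add_left_nhds_zero x, eventually_map] at h
    exact Metric.eventually_nhds_iff_ball.1 h
  have hball : 𝓝[Metric.ball 0 r] (0 : E) = 𝓝 0 :=
    nhdsWithin_eq_nhds.2 (Metric.ball_mem_nhds 0 hr)
  -- the remainder `g` has derivative `f'(x + k) - f'(x) - f''(k)`, which is `o(‖k‖)`
  set g : E → F := fun k => f (x + k) - fderiv ℝ f x k - (2 : ℝ)⁻¹ • f'' k k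
  have hg : ∀ k ∈ Metric.ball (0 : E) r, HasFDerivWithinAt g
      (fderiv ℝ f (x + k) - fderiv ℝ f x - f'' k) (Metric.ball 0 r) k := fun k hk =>
    ((((hdiff k hk).hasFDerivAt.comp k ((hasFDerivAt_id k).const_add x)).sub
      (fderiv ℝ f x).hasFDerivAt).sub
      (f''.hasFDerivAt_half_apply_self (hf.isSymmSndFDerivAt (by simp)) k)).hasFDerivWithinAt
  have hg' : (fun k => fderiv ℝ f (x + k) - fderiv ℝ f x - f'' k)
      =o[𝓝[Metric.ball 0 r] 0] fun k => ‖k - 0‖ ^ 1 := by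
    simpa [hball] using (hasFDerivAt_iff_isLittleO_nhds_zero.1 hf'').norm_right
  have := (convex_ball (0 : E) r).isLittleO_pow_succ (Metric.mem_ball_self hr) hg hg'
  rw [hball] at this
  refine this.congr (fun h => ?_) fun h => by simp
  simp only [g, add_zero, map_zero, smul_zero, sub_zero]
  abel

theorem ContDiffAt.isLittleO_centralSecondDiff (hf : ContDiffAt ℝ 2 f x) :
    (fun h => f (x + h) + f (x - h) - (2 : ℝ) • f x - fderiv ℝ (fderiv ℝ f) x h h)
      =o[𝓝 0] fun h => ‖h‖ ^ 2 := by
  have htaylor := hf.isLittleO_taylor_two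
  have hneg : Tendsto (fun h : E => -h) (𝓝 0) (𝓝 0) := by
    simpa using (continuous_neg (G := E)).tendsto 0
  refine (htaylor.add ((htaylor.comp_tendsto hneg).congr_right fun h => by simp)).congr
    (fun h => ?_) fun _ => rfl
  simp only [Function.comp_apply, map_neg, neg_apply, neg_neg, ← sub_eq_add_neg]
  module

end Taylor

section Bilinear

variable {α 𝕜 E F : Type*} [NontriviallyNormedField 𝕜] [NormedAddCommGroup E] [NormedSpace 𝕜 E]
  [NormedAddCommGroup F] [NormedSpace 𝕜 F] {l : Filter α}

theorem ContinuousLinearMap.isLittleO_apply_apply {G : Type*} [NormedAddCommGroup G]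
    [NormedSpace 𝕜 G] (B : E →L[𝕜] F →L[𝕜] G) {p : α → E} {q : α → F} {gp gq : α → ℝ} (hp : p =O[l] gp) (hq : q =o[l] gq) :
    (fun a => B (p a) (q a)) =o[l] fun a => gp a * gq a :=
  B.isBoundedBilinearMap.isBigO_comp.trans_isLittleO (hp.norm_left.mul_isLittleO hq.norm_left)

theorem ContinuousLinearMap.isLittleO_apply_add_apply_add_sub (B : E →L[𝕜] E →L[𝕜] F)
    {u v : α → E} {g : α → ℝ} (hu : u =O[l] g) (hv : v =o[l] g) :
    (fun a => B (u a + v a) (u a + v a) - B (u a) (u a)) =o[l] fun a => g a ^ 2 := by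
  refine ((B.isLittleO_apply_apply (hu.add hv.isBigO) hv).add
    (B.flip.isLittleO_apply_apply hu hv)).congr (fun a => ?_) fun a => (sq _).symm
  simp only [map_add, add_apply, flip_apply]
  abel

end Bilinear

theorem Filter.limsup_nonpos_of_eventually_le_of_tendsto {α : Type*} {l : Filter α}
    {u v : α → ℝ} (huv : ∀ᶠ a in l, u a ≤ v a) (hv : Tendsto v l (𝓝 0)) :
    limsup u l ≤ 0 := by
  have hS : ∀ c > 0, c ∈ {a | ∀ᶠ x in l, u x ≤ a} := fun c hc =>
    (huv.and (hv.eventually_le_const hc)).mono fun x hx => hx.1.trans hx.2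
  rw [limsup_eq]
  by_cases hbdd : BddBelow {a | ∀ᶠ x in l, u x ≤ a}
  · exact le_of_forall_pos_le_add fun c hc => by simpa using csInf_le hbdd (hS c hc)
  -- a set of reals that is not bounded below has `sInf` equal to `0`
  · rw [Real.sInf_of_not_bddBelow hbdd]

theorem pi_norm_le_of_sum_sq_le {ι : Type*} [Fintype ι] {a : ι → ℝ} {r : ℝ} (hr : 0 ≤ r)
    (h : ∑ i, a i ^ 2 ≤ r ^ 2) : ‖a‖ ≤ r :=
  (pi_norm_le_iff_of_nonneg hr).2 fun i => by
    rw [Real.norm_eq_abs]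
    exact abs_le_of_sq_le_sq ((Finset.single_le_sum (fun j _ => sq_nonneg (a j))
      (Finset.mem_univ i)).trans h) hr

section Gauge

variable {n : ℕ}

theorem mem_hClosedBall_hOne {Q : Heis n} {ε : ℝ} :
    Q ∈ hClosedBall (hOne : Heis n) ε ↔ hGauge Q ≤ ε := by
  simp [hClosedBall, hMul, hInv, hOne]

theorem hGauge_neg (Q : Heis n) : hGauge (-Q) = hGauge Q := by
  simp [hGauge]

theorem neg_mem_hClosedBall_hOne {Q : Heis n} {ε : ℝ}
    (hQ : Q ∈ hClosedBall (hOne : Heis n) ε) : -Q ∈ hClosedBall (hOne : Heis n) ε := by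
  rwa [mem_hClosedBall_hOne, hGauge_neg, ← mem_hClosedBall_hOne]

theorem hGauge_nonneg (Q : Heis n) : 0 ≤ hGauge Q := by
  unfold hGauge
  positivity

theorem hGauge_pow_four (Q : Heis n) :
    hGauge Q ^ 4 = ((∑ i, Q.1 i ^ 2) + ∑ i, Q.2.1 i ^ 2) ^ 2 + Q.2.2 ^ 2 := by
  rw [hGauge, ← Real.rpow_natCast, ← Real.rpow_mul (by positivity)]
  norm_num

theorem sq_add_sq_le_of_hGauge_le {Q : Heis n} {ε : ℝ} (hQ : hGauge Q ≤ ε) :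
    ((∑ i, Q.1 i ^ 2) + ∑ i, Q.2.1 i ^ 2) ^ 2 + Q.2.2 ^ 2 ≤ (ε ^ 2) ^ 2 := by
  rw [← hGauge_pow_four, ← pow_mul]
  exact pow_le_pow_left₀ (hGauge_nonneg Q) hQ 4

theorem sum_sq_le_of_hGauge_le {Q : Heis n} {ε : ℝ} (hQ : hGauge Q ≤ ε) :
    (∑ i, Q.1 i ^ 2) + ∑ i, Q.2.1 i ^ 2 ≤ ε ^ 2 := by
  have h := sq_add_sq_le_of_hGauge_le hQ
  exact (abs_le_of_sq_le_sq' (by nlinarith [sq_nonneg Q.2.2]) (by positivity)).2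

theorem abs_le_of_hGauge_le {Q : Heis n} {ε : ℝ} (hQ : hGauge Q ≤ ε) : |Q.2.2| ≤ ε ^ 2 := by
  have h := sq_add_sq_le_of_hGauge_le hQ
  exact abs_le_of_sq_le_sq (by nlinarith [sq_nonneg ((∑ i, Q.1 i ^ 2) + ∑ i, Q.2.1 i ^ 2)])
    (by positivity)

def hHoriz (Q : Heis n) : Heis n := (Q.1, Q.2.1, 0)

def hVert (Q : Heis n) : Heis n := (0, 0, Q.2.2)

theorem hHoriz_add_hVert (Q : Heis n) : hHoriz Q + hVert Q = Q := by
  ext <;> simp [hHoriz, hVert]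

theorem norm_hHoriz_le {Q : Heis n} {ε : ℝ} (hQ : hGauge Q ≤ ε) : ‖hHoriz Q‖ ≤ ε := by
  have hε : 0 ≤ ε := (hGauge_nonneg Q).trans hQ
  have hS := sum_sq_le_of_hGauge_le hQ
  have hx : 0 ≤ ∑ i, Q.1 i ^ 2 := by positivity
  have hy : 0 ≤ ∑ i, Q.2.1 i ^ 2 := by positivity
  simp only [hHoriz, norm_prod_le_iff, norm_zero, hε, and_true]
  exact ⟨pi_norm_le_of_sum_sq_le hε (by linarith), pi_norm_le_of_sum_sq_le hε (by linarith)⟩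

theorem norm_hVert_le {Q : Heis n} {ε : ℝ} (hQ : hGauge Q ≤ ε) : ‖hVert Q‖ ≤ ε ^ 2 := by
  simpa [hVert, norm_prod_le_iff, sq_nonneg] using abs_le_of_hGauge_le hQ

theorem norm_le_of_hGauge_le {Q : Heis n} {ε : ℝ} (hQ : hGauge Q ≤ ε) : ‖Q‖ ≤ ε + ε ^ 2 :=
  calc ‖Q‖ = ‖hHoriz Q + hVert Q‖ := by rw [hHoriz_add_hVert]
    _ ≤ ε + ε ^ 2 := (norm_add_le _ _).trans (add_le_add (norm_hHoriz_le hQ) (norm_hVert_le hQ))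

theorem tendsto_hClosedBall_hOne_smallSets :
    Tendsto (hClosedBall (hOne : Heis n)) (𝓝[>] 0) (𝓝 (0 : Heis n)).smallSets := by
  refine Metric.nhds_basis_closedBall.smallSets.tendsto_right_iff.2 fun δ hδ => ?_
  have hlim : Tendsto (fun ε : ℝ => ε + ε ^ 2) (𝓝 0) (𝓝 0) := by
    simpa using ((by fun_prop : Continuous fun ε : ℝ => ε + ε ^ 2).tendsto 0)
  filter_upwards [(hlim.eventually (ge_mem_nhds hδ)).filter_mono nhdsWithin_le_nhds]
    with ε hε Q hQ
  rw [mem_closedBall_zero_iff]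
  exact (norm_le_of_hGauge_le (mem_hClosedBall_hOne.1 hQ)).trans hε

end Gauge

theorem fderiv_fderiv_apply_of_hasFDerivAt {𝕜 E F : Type*} [NontriviallyNormedField 𝕜]
    [NormedAddCommGroup E] [NormedSpace 𝕜 E] [NormedAddCommGroup F] [NormedSpace 𝕜 F]
    {f : E → F} {x : E} {a : E → E} {a' : E →L[𝕜] E}
    (hf : DifferentiableAt 𝕜 (fderiv 𝕜 f) x) (ha : HasFDerivAt a a' x) (u : E) :
    fderiv 𝕜 (fun y => fderiv 𝕜 f y (a y)) x u
      = fderiv 𝕜 (fderiv 𝕜 f) x u (a x) + fderiv 𝕜 f x (a' u) := by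
  rw [(hf.hasFDerivAt.clm_apply ha).fderiv]
  simp [add_comm]

section Frame

variable {n : ℕ}

def hE (i : Fin n) : Heis n := (Pi.single i 1, 0, 0)

def hF (i : Fin n) : Heis n := (0, Pi.single i 1, 0)

theorem sum_smul_hE_add_smul_hF (v w : Fin n → ℝ) :
    ∑ i, (v i • hE i + w i • hF i) = (v, w, 0) := by
  ext <;> simp [hE, hF, Prod.fst_sum, Prod.snd_sum, Finset.sum_apply, Pi.single_apply]

theorem hasFDerivAt_Xfield (j : Fin n) (P : Heis n) :
    HasFDerivAt (fun Q : Heis n => ((Pi.single j 1 : Fin n → ℝ), (0 : Fin n → ℝ), 2 * Q.2.1 j))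
      (((2 : ℝ) • ContinuousLinearMap.proj j ∘L ContinuousLinearMap.fst ℝ _ ℝ ∘L
        ContinuousLinearMap.snd ℝ (Fin n → ℝ) _).smulRight ((0, 0, 1) : Heis n)) P := by
  refine ((ContinuousLinearMap.hasFDerivAt _).const_add (hE j)).congr_of_eventuallyEq
    (.of_forall fun Q => ?_)
  ext <;> simp [hE, mul_comm]

theorem hasFDerivAt_Yfield (j : Fin n) (P : Heis n) :
    HasFDerivAt (fun Q : Heis n => ((0 : Fin n → ℝ), (Pi.single j 1 : Fin n → ℝ), -(2 * Q.1 j)))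
      (((-2 : ℝ) • ContinuousLinearMap.proj j ∘L ContinuousLinearMap.fst ℝ (Fin n → ℝ) _).smulRight
        ((0, 0, 1) : Heis n)) P := by
  refine ((ContinuousLinearMap.hasFDerivAt _).const_add (hF j)).congr_of_eventuallyEq
    (.of_forall fun Q => ?_)
  ext <;> simp [hF, mul_comm]

variable {φ : Heis n → ℝ} (hφ : DifferentiableAt ℝ (fderiv ℝ φ) 0)
include hφ

theorem Xd_Xd_zero (i j : Fin n) :
    Xd i (Xd j φ) 0 = fderiv ℝ (fderiv ℝ φ) 0 (hE i) (hE j) := by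
  have := fderiv_fderiv_apply_of_hasFDerivAt hφ (hasFDerivAt_Xfield j 0) (hE i)
  unfold Xd
  simpa [hE] using this

theorem Xd_Yd_zero (i j : Fin n) :
    Xd i (Yd j φ) 0
      = fderiv ℝ (fderiv ℝ φ) 0 (hE i) (hF j) - 2 * (Pi.single i 1 : Fin n → ℝ) j * Td φ 0 := by
  have := fderiv_fderiv_apply_of_hasFDerivAt hφ (hasFDerivAt_Yfield j 0) (hE i)
  unfold Xd Yd Td
  simpa [hE, hF, -Prod.smul_mk, sub_eq_add_neg, mul_comm, mul_assoc] using this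

theorem Yd_Xd_zero (i j : Fin n) :
    Yd i (Xd j φ) 0
      = fderiv ℝ (fderiv ℝ φ) 0 (hF i) (hE j) + 2 * (Pi.single i 1 : Fin n → ℝ) j * Td φ 0 := by
  have := fderiv_fderiv_apply_of_hasFDerivAt hφ (hasFDerivAt_Xfield j 0) (hF i)
  unfold Xd Yd Td
  simpa [hE, hF, -Prod.smul_mk, sub_eq_add_neg, mul_comm, mul_assoc] using this

theorem Yd_Yd_zero (i j : Fin n) :
    Yd i (Yd j φ) 0 = fderiv ℝ (fderiv ℝ φ) 0 (hF i) (hF j) := by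
  have := fderiv_fderiv_apply_of_hasFDerivAt hφ (hasFDerivAt_Yfield j 0) (hF i)
  unfold Yd
  simpa [hF] using this

theorem hQuad_zero_eq (v w : Fin n → ℝ) :
    hQuad φ 0 v w = fderiv ℝ (fderiv ℝ φ) 0 (v, w, 0) (v, w, 0) := by
  set B := fderiv ℝ (fderiv ℝ φ) 0
  set h : Fin n → Heis n := fun i => v i • hE i + w i • hF i
  calc hQuad φ 0 v w
      = ∑ i, ∑ j, (B (h i) (h j)
          + 2 * Td φ 0 * ((Pi.single i 1 : Fin n → ℝ) j * (w i * v j - v i * w j))) := by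
        unfold hQuad
        refine Finset.sum_congr rfl fun i _ => Finset.sum_congr rfl fun j _ => ?_
        simp only [h, Xd_Xd_zero hφ, Xd_Yd_zero hφ, Yd_Xd_zero hφ, Yd_Yd_zero hφ, map_add,
          map_smul, add_apply, smul_apply, smul_eq_mul]
        ring
    _ = ∑ i, ∑ j, B (h i) (h j) := by
        simp [Finset.sum_add_distrib, Pi.single_apply, mul_comm]
    _ = B (∑ i, h i) (∑ j, h j) := by
        simp only [map_sum, sum_apply]
        exact Finset.sum_comm
    _ = B (v, w, 0) (v, w, 0) := by rw [sum_smul_hE_add_smul_hF]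

end Frame

section Expansion

variable {n : ℕ} {α : Type*} {l : Filter α} {P : α → Heis n} {g : α → ℝ}

theorem isBigO_hHoriz_of_hGauge_le (hP : ∀ᶠ a in l, hGauge (P a) ≤ g a) :
    (fun a => hHoriz (P a)) =O[l] g :=
  .of_bound 1 <| hP.mono fun a ha => by simpa using (norm_hHoriz_le ha).trans (le_abs_self _)

theorem isBigO_hVert_of_hGauge_le (hP : ∀ᶠ a in l, hGauge (P a) ≤ g a) :
    (fun a => hVert (P a)) =O[l] fun a => g a ^ 2 :=
  .of_bound 1 <| hP.mono fun a ha => by simpa using norm_hVert_le ha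

theorem isLittleO_add_neg_sub_hQuad {φ : Heis n → ℝ} (hφ : ContDiffAt ℝ 2 φ 0)
    (hP : ∀ᶠ a in l, hGauge (P a) ≤ g a) (hg : Tendsto g l (𝓝 0)) :
    (fun a => φ (P a) + φ (-P a) - 2 * φ 0 - hQuad φ 0 (P a).1 (P a).2.1)
      =o[l] fun a => g a ^ 2 := by
  have hH := isBigO_hHoriz_of_hGauge_le hP
  have hV : (fun a => hVert (P a)) =o[l] g :=
    (isBigO_hVert_of_hGauge_le hP).trans_isLittleO ((isLittleO_pow_id one_lt_two).comp_tendsto hg)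
  have hPg : P =O[l] g := by simpa only [hHoriz_add_hVert] using hH.add hV.isBigO
  have heven := (hφ.isLittleO_centralSecondDiff.comp_tendsto (hPg.trans_tendsto hg)).trans_isBigO
    (hPg.norm_left.pow 2)
  -- only the horizontal part of `P` survives in the quadratic term
  have hhoriz := (fderiv ℝ (fderiv ℝ φ) 0).isLittleO_apply_add_apply_add_sub hH hV
  refine (heven.add hhoriz).congr (fun a => ?_) fun _ => rfl
  simp only [Function.comp_apply, hHoriz_add_hVert,
    hQuad_zero_eq ((hφ.fderiv_right le_rfl).differentiableAt one_ne_zero)]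
  simp [hHoriz]

theorem eventually_sInf_image_hClosedBall_hOne_le {φ : Heis n → ℝ} (hφ : ContinuousAt φ 0) :
    ∀ᶠ ε in 𝓝[>] 0, ∀ Q ∈ hClosedBall (hOne : Heis n) ε,
      sInf (φ '' hClosedBall (hOne : Heis n) ε) ≤ φ Q := by
  have hlow : ∀ᶠ ε in 𝓝[>] 0, ∀ Q ∈ hClosedBall (hOne : Heis n) ε, φ 0 - 1 < φ Q :=
    tendsto_hClosedBall_hOne_smallSets.eventually <| eventually_smallSets_forall.2 <|
      hφ.eventually (lt_mem_nhds (sub_one_lt _))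
  filter_upwards [hlow] with ε hε Q hQ
  exact csInf_le ⟨φ 0 - 1, by rintro _ ⟨R, hR, rfl⟩; exact (hε R hR).le⟩ ⟨Q, hQ, rfl⟩

end Expansion

theorem maximizer_taylor_pair_general (n : ℕ) (φ : Heis n → ℝ) (hφ : ContDiffAt ℝ 2 φ 0)
    (ε₀ : ℝ) (hε₀ : 0 < ε₀) (Pm : ℝ → Heis n)
    (hmem : ∀ ε ∈ Set.Ioo (0:ℝ) ε₀, Pm ε ∈ hClosedBall (hOne : Heis n) ε) :
    ((fun ε : ℝ => φ (Pm ε) + φ (-(Pm ε)) - 2 * φ 0 - hQuad φ 0 (Pm ε).1 (Pm ε).2.1)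
        =o[𝓝[>] (0:ℝ)] fun ε => ε ^ 2) ∧
    Filter.limsup
        (fun ε : ℝ => (φ (Pm ε) + sInf (φ '' hClosedBall (hOne : Heis n) ε)
            - 2 * φ 0 - hQuad φ 0 (Pm ε).1 (Pm ε).2.1) / ε ^ 2)
        (𝓝[>] (0:ℝ)) ≤ 0 := by
  have hgauge : ∀ᶠ ε in 𝓝[>] 0, hGauge (Pm ε) ≤ ε := by
    filter_upwards [Ioo_mem_nhdsGT hε₀] with ε hε using mem_hClosedBall_hOne.1 (hmem ε hε)
  have hexp := isLittleO_add_neg_sub_hQuad hφ hgauge (tendsto_id.mono_left nhdsWithin_le_nhds)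
  refine ⟨hexp, Filter.limsup_nonpos_of_eventually_le_of_tendsto ?_ hexp.tendsto_div_nhds_zero⟩
  filter_upwards [eventually_sInf_image_hClosedBall_hOne_le hφ.continuousAt,
    Ioo_mem_nhdsGT hε₀] with ε hmin hε
  gcongr
  exact hmin _ (neg_mem_hClosedBall_hOne (hmem ε hε))

/-- Key expansion at maximizers: if `φ` is `C²` near `0` and `P_{ε,M} = (x_ε,y_ε,t_ε)`
maximizes `φ` on `B̄(0,ε)`, then
`φ(P_{ε,M}) + φ(−P_{ε,M}) = 2φ(0) + ⟨D²_ℍφ(0)(x_ε,y_ε),(x_ε,y_ε)⟩ + o(ε²)`, and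
consequently `max φ + min φ ≤ 2φ(0) + ⟨D²_ℍφ(0)(x_ε,y_ε),(x_ε,y_ε)⟩ + o(ε²)`. -/
theorem maximizer_taylor_pair (n : ℕ) (φ : Heis n → ℝ) (hφ : ContDiffAt ℝ 2 φ 0)
    (ε₀ : ℝ) (hε₀ : 0 < ε₀) (Pm : ℝ → Heis n)
    (hmem : ∀ ε ∈ Set.Ioo (0:ℝ) ε₀, Pm ε ∈ hClosedBall (hOne : Heis n) ε)
    (hmax : ∀ ε ∈ Set.Ioo (0:ℝ) ε₀, IsMaxOn φ (hClosedBall (hOne : Heis n) ε) (Pm ε)) :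
    ((fun ε : ℝ => φ (Pm ε) + φ (-(Pm ε)) - 2 * φ 0 - hQuad φ 0 (Pm ε).1 (Pm ε).2.1)
        =o[𝓝[>] (0:ℝ)] fun ε => ε ^ 2) ∧
    Filter.limsup
        (fun ε : ℝ => (φ (Pm ε) + sInf (φ '' hClosedBall (hOne : Heis n) ε)
            - 2 * φ 0 - hQuad φ 0 (Pm ε).1 (Pm ε).2.1) / ε ^ 2)
        (𝓝[>] (0:ℝ)) ≤ 0 :=
  maximizer_taylor_pair_general n φ hφ ε₀ hε₀ Pm hmem
end
end
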